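/- Let (R,Δ) be an odd form ring, n ∈ ℕ, (I,Ω) an odd form ideal of (R,Δ) and σ ∈ U_{2n+1}(R,Δ). Then σ ∈ U_{2n+1}((R,Δ),(I,Ω)) if and only if both of the following hold: (1) σ_{ij} − δ_{ij} ∈ I for all i,j ∈ Θ_hb; and (2) q(σ_{*j}) ∈ Ω for all j ∈ Θ_hb, and (q(σ_{*0}) ∸ (1,0))•x ∈ Ω for all x ∈ J(Δ), where σ_{*j} denotes the j-th column of σ. -/

import Mathlib

open scoped BigOperators

noncomputable section

/-- The index set `Θ = {-n, …, n}` for the odd-dimensional unitary group. -/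
abbrev Idx (n : ℕ) : Type := {i : ℤ // i ∈ Finset.Icc (-(n : ℤ)) (n : ℤ)}

namespace Idx

/-- Negation of an index. -/
def neg {n : ℕ} (i : Idx n) : Idx n :=
  ⟨-i.1, by have h := i.2; rw [Finset.mem_Icc] at h ⊢; omega⟩

/-- The index `0`. -/
def zero (n : ℕ) : Idx n := ⟨0, by rw [Finset.mem_Icc]; omega⟩

/-- Construct an index from an integer. -/
def of (n : ℕ) (i : ℤ) (h1 : -(n : ℤ) ≤ i) (h2 : i ≤ (n : ℤ)) : Idx n :=
  ⟨i, Finset.mem_Icc.mpr ⟨h1, h2⟩⟩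

end Idx

/-- The positive indices `{1, …, n}`. -/
def posIdx (n : ℕ) : Finset (Idx n) := Finset.univ.filter (fun i => 0 < i.1)

/-- The position of an index in the ordering `1, …, n, 0, -n, …, -1`. -/
def ordIdx {n : ℕ} (i : Idx n) : ℤ :=
  if 0 < i.1 then i.1 else if i.1 = 0 then (n : ℤ) + 1 else 2 * (n : ℤ) + 2 + i.1

/-- The group `GL_{2n+1}(R)` of invertible `(2n+1) × (2n+1)` matrices. -/
abbrev GLn (R : Type*) [Ring R] (n : ℕ) : Type _ := (Matrix (Idx n) (Idx n) R)ˣ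

/-- `J(Ω) = {y | ∃ z, (y, z) ∈ Ω}`. -/
def JSet {R : Type*} (Ω : Set (R × R)) : Set R := {y | ∃ z, (y, z) ∈ Ω}

/-- `M(R, Δ) = {u | u_0 ∈ J(Δ)}`. -/
def MRD {R : Type*} (Δ : Set (R × R)) (n : ℕ) : Set (Idx n → R) :=
  {u | u (Idx.zero n) ∈ JSet Δ}

/-- `M(I, Ω) = {u | u_i ∈ I for i ∈ Θ_hb, u_0 ∈ J(Ω)}`. -/
def MIO {R : Type*} (I : Set R) (Ω : Set (R × R)) (n : ℕ) : Set (Idx n → R) :=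
  {u | (∀ i : Idx n, i.1 ≠ 0 → u i ∈ I) ∧ u (Idx.zero n) ∈ JSet Ω}

/-- The data of an odd quadruple `(R, ⁻, λ, μ)`: a ring with an anti-isomorphism `bar`,
a symmetry `lam` and an element `mu` with `mu = bar mu * lam`. -/
structure OddFormRingData (R : Type*) [Ring R] where
  bar : R → R
  lam : R
  mu : R
  bar_bijective : Function.Bijective bar
  bar_add : ∀ x y : R, bar (x + y) = bar x + bar y
  bar_mul : ∀ x y : R, bar (x * y) = bar y * bar x
  bar_one : bar 1 = 1
  bar_bar : ∀ x : R, bar (bar x) = lam * x * bar lam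
  mu_symm : mu = bar mu * lam

namespace OddFormRingData

variable {R : Type*} [Ring R] (D : OddFormRingData R)

/-- Heisenberg addition `∔` on `R × R`. -/
def hAdd (a b : R × R) : R × R := (a.1 + b.1, a.2 + b.2 - D.bar a.1 * D.mu * b.1)

/-- Heisenberg negation. -/
def hNeg (a : R × R) : R × R := (-a.1, -a.2 - D.bar a.1 * D.mu * a.1)

/-- Heisenberg subtraction `∸`. -/
def hSub (a b : R × R) : R × R := D.hAdd a (D.hNeg b)

/-- The scalar operation `(x, y) • a = (x a, ā y a)`. -/
def hSMul (a : R × R) (r : R) : R × R := (a.1 * r, D.bar r * a.2 * r)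

/-- `Δ_min = {(0, x - x̄ λ) | x ∈ R}`. -/
def DeltaMin : Set (R × R) := {p | ∃ x : R, p = (0, x - D.bar x * D.lam)}

/-- `Δ_max = {(x, y) | x̄ μ x + y + ȳ λ = 0}`. -/
def DeltaMax : Set (R × R) := {p | D.bar p.1 * D.mu * p.1 + p.2 + D.bar p.2 * D.lam = 0}

/-- `Δ` is an odd form parameter. -/
structure IsFormParam (Δ : Set (R × R)) : Prop where
  add_mem : ∀ a ∈ Δ, ∀ b ∈ Δ, D.hAdd a b ∈ Δ
  neg_mem : ∀ a ∈ Δ, D.hNeg a ∈ Δ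
  smul_mem : ∀ a ∈ Δ, ∀ r : R, D.hSMul a r ∈ Δ
  min_le : D.DeltaMin ⊆ Δ
  le_max : Δ ⊆ D.DeltaMax

/-- `I` is an involution invariant (two-sided) ideal of `R`. -/
structure IsInvIdeal (I : Set R) : Prop where
  zero_mem : (0 : R) ∈ I
  add_mem : ∀ x ∈ I, ∀ y ∈ I, x + y ∈ I
  neg_mem : ∀ x ∈ I, -x ∈ I
  mul_left : ∀ r : R, ∀ x ∈ I, r * x ∈ I
  mul_right : ∀ r : R, ∀ x ∈ I, x * r ∈ I
  bar_mem : ∀ x ∈ I, D.bar x ∈ I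

/-- `Ĩ = {x | ȳ μ x ∈ I for all y ∈ J(Δ)}`. -/
def tildeI (Δ : Set (R × R)) (I : Set R) : Set R :=
  {x | ∀ y ∈ JSet Δ, D.bar y * D.mu * x ∈ I}

/-- `Ω^I_min`, the `∔`-subgroup of `R × R` generated by `{(0, x - x̄λ) | x ∈ I}` and
`{a • c | a ∈ Δ, c ∈ I}`. -/
inductive OmegaMin (Δ : Set (R × R)) (I : Set R) : R × R → Prop
  | base (x : R) (hx : x ∈ I) : OmegaMin Δ I (0, x - D.bar x * D.lam)
  | smul (a : R × R) (ha : a ∈ Δ) (c : R) (hc : c ∈ I) : OmegaMin Δ I (D.hSMul a c)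
  | add (a b : R × R) : OmegaMin Δ I a → OmegaMin Δ I b → OmegaMin Δ I (D.hAdd a b)
  | neg (a : R × R) : OmegaMin Δ I a → OmegaMin Δ I (D.hNeg a)

/-- `Ω^I_min` as a set. -/
def OmegaMinSet (Δ : Set (R × R)) (I : Set R) : Set (R × R) := {p | D.OmegaMin Δ I p}

/-- `Ω^I_max = Δ ∩ (Ĩ × I)`. -/
def OmegaMaxSet (Δ : Set (R × R)) (I : Set R) : Set (R × R) :=
  {p | p ∈ Δ ∧ p.1 ∈ D.tildeI Δ I ∧ p.2 ∈ I}

/-- `Ω` is a relative odd form parameter for `I`. -/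
structure IsRelFormParam (Δ : Set (R × R)) (I : Set R) (Ω : Set (R × R)) : Prop where
  add_mem : ∀ a ∈ Ω, ∀ b ∈ Ω, D.hAdd a b ∈ Ω
  neg_mem : ∀ a ∈ Ω, D.hNeg a ∈ Ω
  smul_mem : ∀ a ∈ Ω, ∀ r : R, D.hSMul a r ∈ Ω
  min_le : D.OmegaMinSet Δ I ⊆ Ω
  le_max : Ω ⊆ D.OmegaMaxSet Δ I

/-- `(I, Ω)` is an odd form ideal of `(R, Δ)`. -/
def IsFormIdeal (Δ : Set (R × R)) (I : Set R) (Ω : Set (R × R)) : Prop :=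
  D.IsInvIdeal I ∧ D.IsRelFormParam Δ I Ω

/-- `Ω^{-1} = {(x, y) | (x, ȳ) ∈ Ω}`. -/
def paramInv (Ω : Set (R × R)) : Set (R × R) := {p | (p.1, D.bar p.2) ∈ Ω}

/-- `Ω^{-ε(i)}`. -/
def paramPow {n : ℕ} (Ω : Set (R × R)) (i : Idx n) : Set (R × R) :=
  if 0 < i.1 then D.paramInv Ω else Ω

/-- The λ-Hermitian form `b`. -/
def bform {n : ℕ} (u v : Idx n → R) : R :=
  (∑ i ∈ posIdx n, D.bar (u i) * v i.neg) + D.bar (u (Idx.zero n)) * D.mu * v (Idx.zero n)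
    + ∑ i ∈ posIdx n, D.bar (u i.neg) * D.lam * v i

/-- The quadratic map `q`. -/
def qform {n : ℕ} (u : Idx n → R) : R × R :=
  (u (Idx.zero n), ∑ i ∈ posIdx n, D.bar (u i) * u i.neg)

/-- The odd-dimensional unitary group `U_{2n+1}(R, Δ)`, as a subset of `GL_{2n+1}(R)`. -/
def unitary (Δ : Set (R × R)) (n : ℕ) : Set (GLn R n) :=
  {σ | (∀ u v : Idx n → R,
          D.bform (Matrix.mulVec σ.val u)
            (Matrix.mulVec σ.val v) = D.bform u v)
      ∧ ∀ u : Idx n → R,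
          D.hSub (D.qform (Matrix.mulVec σ.val u)) (D.qform u) ∈ Δ}

/-- The short root matrix `T_{ij}(x)`. -/
def shortRootMat {n : ℕ} (i j : Idx n) (x : R) : Matrix (Idx n) (Idx n) R :=
  1 + Matrix.single i j x
    - Matrix.single j.neg i.neg
        ((if 0 < j.1 then (1 : R) else D.bar D.lam) * D.bar x *
          (if 0 < i.1 then (1 : R) else D.lam))

/-- The extra short root matrix `T_i(x, y)`. -/
def extraShortRootMat {n : ℕ} (i : Idx n) (x y : R) : Matrix (Idx n) (Idx n) R :=
  1 + Matrix.single (Idx.zero n) i.neg x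
    - Matrix.single i (Idx.zero n)
        ((if 0 < i.1 then D.bar D.lam else (1 : R)) * D.bar x * D.mu)
    + Matrix.single i i.neg y

/-- `g` is a short root matrix `T_{ij}(x)`. -/
def IsShortRootElem {n : ℕ} (g : GLn R n) : Prop :=
  ∃ (i j : Idx n) (x : R), i.1 ≠ 0 ∧ j.1 ≠ 0 ∧ i.1 ≠ j.1 ∧ i.1 ≠ -j.1 ∧
    g.val = D.shortRootMat i j x

/-- `g` is an extra short root matrix `T_i(x, y)` with `(x, y) ∈ Δ^{-ε(i)}`. -/
def IsExtraShortRootElem {n : ℕ} (Δ : Set (R × R)) (g : GLn R n) : Prop :=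
  ∃ (i : Idx n) (x y : R), i.1 ≠ 0 ∧ (x, y) ∈ D.paramPow Δ i ∧
    g.val = D.extraShortRootMat i x y

/-- The elementary subgroup `EU_{2n+1}(R, Δ)`. -/
def elemGroup (Δ : Set (R × R)) (n : ℕ) : Subgroup (GLn R n) :=
  Subgroup.closure {g | D.IsShortRootElem g ∨ D.IsExtraShortRootElem Δ g}

/-- `g` is an `(I, Ω)`-elementary short root matrix. -/
def IsRelShortRootElem {n : ℕ} (I : Set R) (g : GLn R n) : Prop :=
  ∃ (i j : Idx n) (x : R), i.1 ≠ 0 ∧ j.1 ≠ 0 ∧ i.1 ≠ j.1 ∧ i.1 ≠ -j.1 ∧ x ∈ I ∧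
    g.val = D.shortRootMat i j x

/-- `g` is an `(I, Ω)`-elementary extra short root matrix. -/
def IsRelExtraShortRootElem {n : ℕ} (Ω : Set (R × R)) (g : GLn R n) : Prop :=
  ∃ (i : Idx n) (x y : R), i.1 ≠ 0 ∧ (x, y) ∈ D.paramPow Ω i ∧
    g.val = D.extraShortRootMat i x y

/-- The preelementary subgroup `EU_{2n+1}(I, Ω)`. -/
def preElemGroup (I : Set R) (Ω : Set (R × R)) (n : ℕ) : Subgroup (GLn R n) :=
  Subgroup.closure {g | D.IsRelShortRootElem I g ∨ D.IsRelExtraShortRootElem Ω g}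

/-- The relative elementary subgroup `EU_{2n+1}((R, Δ), (I, Ω))`,
the normal closure of `EU_{2n+1}(I, Ω)` in `EU_{2n+1}(R, Δ)`. -/
def elemRelGroup (Δ : Set (R × R)) (I : Set R) (Ω : Set (R × R)) (n : ℕ) : Subgroup (GLn R n) :=
  Subgroup.closure {x | ∃ e ∈ D.elemGroup Δ n, ∃ g ∈ D.preElemGroup I Ω n, x = e * g * e⁻¹}

/-- The principal congruence subgroup `U_{2n+1}((R, Δ), (I, Ω))`. -/
def principalCongruence (Δ : Set (R × R)) (I : Set R) (Ω : Set (R × R)) (n : ℕ) :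
    Set (GLn R n) :=
  {σ | σ ∈ D.unitary Δ n
      ∧ (∀ i j : Idx n, i.1 ≠ 0 → j.1 ≠ 0 →
          σ.val i j - (if i = j then (1 : R) else 0) ∈ I)
      ∧ ∀ u ∈ MRD Δ n,
          D.hSub (D.qform (Matrix.mulVec σ.val u)) (D.qform u) ∈ Ω}

/-- The group `Ũ_{2n+1}((R, Δ), (I, Ω))`. -/
def tildeU (Δ : Set (R × R)) (I : Set R) (Ω : Set (R × R)) (n : ℕ) : Set (GLn R n) :=
  {σ | σ ∈ D.unitary Δ n ∧ ∀ u ∈ MIO I Ω n,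
      D.hSub (D.qform (Matrix.mulVec σ.val u)) (D.qform u) ∈ Ω
      ∧ D.hSub (D.qform (Matrix.mulVec ((σ⁻¹).val) u)) (D.qform u) ∈ Ω}

/-- The full congruence subgroup `CU_{2n+1}((R, Δ), (I, Ω))`. -/
def fullCongruence (Δ : Set (R × R)) (I : Set R) (Ω : Set (R × R)) (n : ℕ) : Set (GLn R n) :=
  {σ | σ ∈ D.tildeU Δ I Ω n ∧ ∀ τ ∈ D.elemGroup Δ n,
      σ * τ * σ⁻¹ * τ⁻¹ ∈ D.principalCongruence Δ I Ω n}

/-- `H` is a subgroup of `U_{2n+1}(R, Δ)`. -/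
structure IsSubgroupOfUnitary (Δ : Set (R × R)) (n : ℕ) (H : Set (GLn R n)) : Prop where
  subset : H ⊆ D.unitary Δ n
  one_mem : (1 : GLn R n) ∈ H
  mul_mem : ∀ a ∈ H, ∀ b ∈ H, a * b ∈ H
  inv_mem : ∀ a ∈ H, a⁻¹ ∈ H

/-- `H` is normalized by the elementary subgroup `EU_{2n+1}(R, Δ)`. -/
def IsENormal (Δ : Set (R × R)) (n : ℕ) (H : Set (GLn R n)) : Prop :=
  ∀ e ∈ D.elemGroup Δ n, ∀ h ∈ H, e * h * e⁻¹ ∈ H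

/-- The ideal part of the level of `H`. -/
def levelI {n : ℕ} (H : Set (GLn R n)) : Set R :=
  {x | ∃ i j : Idx n, i.1 ≠ 0 ∧ j.1 ≠ 0 ∧ i.1 ≠ j.1 ∧ i.1 ≠ -j.1 ∧
      ∃ g ∈ H, g.val = D.shortRootMat i j x}

/-- The form parameter part of the level of `H`. -/
def levelOmega {n : ℕ} (Δ : Set (R × R)) (H : Set (GLn R n)) : Set (R × R) :=
  {p | p ∈ Δ ∧ ∃ i : Idx n, i.1 < 0 ∧
      ∃ g ∈ H, g.val = D.extraShortRootMat i p.1 p.2}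

/-- The relative odd form parameter `^σΩ` for `I` defined by `Ω` and `σ`. -/
def transportedParam (Δ : Set (R × R)) (I : Set R) (Ω : Set (R × R)) (n : ℕ) (σ : GLn R n) :
    Set (R × R) :=
  {p | ∃ x y : R, (x, y) ∈ Ω ∧ ∃ m ∈ D.OmegaMinSet Δ I,
      p = D.hAdd (D.hAdd
            (D.hSMul
              (D.hSub (D.qform (fun i => σ.val i (Idx.zero n)))
                ((1 : R), (0 : R))) x)
            (x, y)) m}

/-- `TEU_{2n+1}(R, Δ)`: upper triangular elementary matrices with ones on the diagonal,
with respect to the index ordering `1, …, n, 0, -n, …, -1`. -/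
def upperTriangularElem (Δ : Set (R × R)) (n : ℕ) : Set (GLn R n) :=
  {f | f ∈ D.elemGroup Δ n
      ∧ (∀ i j : Idx n, ordIdx j < ordIdx i → f.val i j = 0)
      ∧ ∀ i : Idx n, f.val i i = 1}

/-- `UEU_{2n+1}(R, Δ)`: elementary matrices of block form `(A B C; 0 1 D; 0 0 E)`
with respect to the decomposition `Θ₊, {0}, Θ₋`. -/
def blockUpperElem (Δ : Set (R × R)) (n : ℕ) : Set (GLn R n) :=
  {f | f ∈ D.elemGroup Δ n
      ∧ (∀ i j : Idx n, i.1 ≤ 0 → 0 < j.1 → f.val i j = 0)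
      ∧ f.val (Idx.zero n) (Idx.zero n) = 1
      ∧ ∀ i : Idx n, i.1 < 0 → f.val i (Idx.zero n) = 0}

/-- `R` is quasifinite: it is the union of a directed family of subrings, each closed
under the involution, containing `λ` and `μ`, and finitely generated as a module over its
center. -/
def IsQuasifinite : Prop :=
  ∃ S : Set (Subring R), S.Nonempty ∧ DirectedOn (· ≤ ·) S ∧
    (∀ A ∈ S, (∀ x ∈ A, D.bar x ∈ A) ∧ D.lam ∈ A ∧ D.mu ∈ A ∧
      ∃ (m : ℕ) (v : Fin m → R), (∀ k, v k ∈ A) ∧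
        ∀ x ∈ A, ∃ c : Fin m → R,
          (∀ k, c k ∈ A ∧ ∀ y ∈ A, c k * y = y * c k) ∧ x = ∑ k, c k * v k) ∧
    ∀ x : R, ∃ A ∈ S, x ∈ A

end OddFormRingData

/-- The Jacobson radical of a (possibly noncommutative) ring. -/
def jacobsonRadical (R : Type*) [Ring R] : Ideal R := sInf {J : Ideal R | J.IsMaximal}

/-- `R` is semilocal: `R / rad R` is semisimple (hence semisimple Artinian). -/
def IsSemilocalRing (R : Type*) [Ring R] : Prop :=
  IsSemisimpleModule R (R ⧸ jacobsonRadical R)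

/-- A bundled (possibly noncommutative) ring. -/
structure BundledRing : Type (u + 1) where
  carrier : Type u
  [str : Ring carrier]

attribute [instance] BundledRing.str

instance : CoeSort BundledRing (Type u) := ⟨BundledRing.carrier⟩

universe u

/-!
Write `φ(u) = q(σu) ∸ q(u)`. Since `σ` preserves `b`, `φ` is additive up to central elements
`(0, z - z̄λ)` of the Heisenberg group, and these lie in `Ω` as soon as `z ∈ I`. For `u` and `v`
with `u₀ = 0` the correction term is built from entries of `σ - 1` in the hyperbolic block, so
`φ` is additive modulo `Ω` on such vectors and `φ(u) ∈ Ω` reduces to `φ(e_j a) = q(σ_{*j}) • a`.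
The remaining coordinate `u₀ ∈ J(Δ)` contributes `(q(σ_{*0}) ∸ (1, 0)) • u₀`; its correction term
lies in `I` because `σ_{i0} x ∈ I` for `x ∈ J(Δ)`, which one reads off from
`0 = b(e_{-i}, e_0 x) = b(σ_{*,-i}, σ_{*0} x)`.
-/

open Matrix

namespace Idx

variable {n : ℕ}

@[simp]
lemma val_neg (i : Idx n) : i.neg.1 = -i.1 := rfl

@[simp]
lemma val_zero : (Idx.zero n).1 = 0 := rfl

lemma eq_zero_iff {i : Idx n} : i = Idx.zero n ↔ i.1 = 0 := Subtype.ext_iff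

lemma zero_ne {j : Idx n} (hj : j.1 ≠ 0) : Idx.zero n ≠ j :=
  fun h => hj (eq_zero_iff.mp h.symm)

end Idx

lemma Matrix.mulVec_single_eq {R m : Type*} [Ring R] [Fintype m] [DecidableEq m]
    (M : Matrix m m R) (j : m) (x : R) : M *ᵥ Pi.single j x = fun i => M i j * x :=
  funext fun _ => dotProduct_single _ _ _

lemma mem_posIdx {n : ℕ} {i : Idx n} : i ∈ posIdx n ↔ 0 < i.1 := by
  simp [posIdx]

namespace OddFormRingData

variable {R : Type*} [Ring R] (D : OddFormRingData R)

section Involution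

def barAddHom : R →+ R := AddMonoidHom.mk' D.bar D.bar_add

lemma bar_zero : D.bar 0 = 0 := map_zero D.barAddHom

lemma bar_sub (x y : R) : D.bar (x - y) = D.bar x - D.bar y := map_sub D.barAddHom x y

lemma bar_sum {ι : Type*} (s : Finset ι) (f : ι → R) :
    D.bar (∑ i ∈ s, f i) = ∑ i ∈ s, D.bar (f i) := map_sum D.barAddHom f s

lemma bar_lam_mul_lam : D.bar D.lam * D.lam = 1 := by
  have hlam : D.lam * D.bar D.lam = 1 := by simpa [D.bar_one] using (D.bar_bar 1).symm
  refine D.bar_bijective.injective (D.bar_bijective.injective ?_)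
  rw [D.bar_bar, D.bar_one, D.bar_one, mul_assoc, mul_assoc, hlam, mul_one, hlam]

lemma bar_bar_mul_mu_mul_lam (a z : R) :
    D.bar (D.bar a * D.mu * z) * D.lam = D.bar z * D.mu * a := by
  rw [D.bar_mul, D.bar_mul, D.bar_bar]
  simp only [mul_assoc, D.bar_lam_mul_lam, mul_one]
  rw [← mul_assoc (D.bar D.mu), ← D.mu_symm]

lemma bar_sum_mul_lam {ι : Type*} (s : Finset ι) (f g : ι → R) :
    D.bar (∑ i ∈ s, D.bar (f i) * g i) * D.lam = ∑ i ∈ s, D.bar (g i) * D.lam * f i := by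
  rw [D.bar_sum, Finset.sum_mul]
  refine Finset.sum_congr rfl fun i _ => ?_
  rw [D.bar_mul, D.bar_bar]
  simp only [mul_assoc, D.bar_lam_mul_lam, mul_one]

end Involution

section Heisenberg

/-- Central for `∔`. -/
def minPair (z : R) : R × R := (0, z - D.bar z * D.lam)

lemma hSub_eq (p r : R × R) :
    D.hSub p r = (p.1 - r.1, p.2 - r.2 - D.bar r.1 * D.mu * r.1 + D.bar p.1 * D.mu * r.1) := by
  simp only [hSub, hAdd, hNeg, Prod.mk.injEq]
  constructor <;> noncomm_ring

lemma hSub_zero (p : R × R) : D.hSub p (0, 0) = p := by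
  simp [hSub_eq, D.bar_zero]

lemma hSMul_one (p : R × R) : D.hSMul p 1 = p := by
  simp [hSMul, D.bar_one]

lemma hSMul_hSub (p r : R × R) (x : R) :
    D.hSMul (D.hSub p r) x = D.hSub (D.hSMul p x) (D.hSMul r x) := by
  simp only [hSub_eq, hSMul, D.bar_mul, Prod.mk.injEq]
  constructor <;> noncomm_ring

end Heisenberg

section Forms

variable {n : ℕ}

def qpair (u v : Idx n → R) : R := ∑ i ∈ posIdx n, D.bar (u i) * v i.neg

lemma qform_eq (u : Idx n → R) : D.qform u = (u (Idx.zero n), D.qpair u u) := rfl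

lemma bform_eq (u v : Idx n → R) :
    D.bform u v = D.qpair u v + D.bar (u (Idx.zero n)) * D.mu * v (Idx.zero n)
      + D.bar (D.qpair v u) * D.lam := by
  rw [bform, qpair, qpair, D.bar_sum_mul_lam]

lemma qpair_add_left (u u' v : Idx n → R) : D.qpair (u + u') v = D.qpair u v + D.qpair u' v := by
  simp only [qpair, Pi.add_apply, D.bar_add, add_mul, Finset.sum_add_distrib]

lemma qpair_add_right (u v v' : Idx n → R) : D.qpair u (v + v') = D.qpair u v + D.qpair u v' := by
  simp only [qpair, Pi.add_apply, mul_add, Finset.sum_add_distrib]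

lemma bform_add_left (u u' v : Idx n → R) : D.bform (u + u') v = D.bform u v + D.bform u' v := by
  simp only [bform_eq, qpair_add_left, qpair_add_right, Pi.add_apply, D.bar_add, add_mul]
  abel

lemma qform_smul (u : Idx n → R) (a : R) :
    D.qform (fun i => u i * a) = D.hSMul (D.qform u) a := by
  simp only [qform, hSMul, Finset.mul_sum, Finset.sum_mul, D.bar_mul, Prod.mk.injEq, true_and]
  exact Finset.sum_congr rfl fun _ _ => by noncomm_ring

lemma qform_zero : D.qform (0 : Idx n → R) = (0, 0) := by
  simp [qform, D.bar_zero]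

lemma qform_single {j : Idx n} (hj : j.1 ≠ 0) (a : R) : D.qform (Pi.single j a) = (0, 0) := by
  rw [qform_eq, qpair, Prod.mk.injEq]
  refine ⟨Pi.single_eq_of_ne (Idx.zero_ne hj) _, Finset.sum_eq_zero fun k _ => ?_⟩
  by_cases hkj : k = j
  · subst hkj
    have hk : k.neg ≠ k := fun h => hj (by have := congrArg Subtype.val h; simp at this; omega)
    rw [Pi.single_eq_of_ne hk, mul_zero]
  · rw [Pi.single_eq_of_ne hkj, D.bar_zero, zero_mul]

lemma qform_single_zero (x : R) : D.qform (Pi.single (Idx.zero n) x) = (x, 0) := by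
  rw [qform_eq, qpair, Prod.mk.injEq]
  refine ⟨Pi.single_eq_same _ _, Finset.sum_eq_zero fun k hk => ?_⟩
  have hk : k ≠ Idx.zero n := fun h => by simp [h, mem_posIdx] at hk
  rw [Pi.single_eq_of_ne hk, D.bar_zero, zero_mul]

lemma bform_single_neg_left {i : Idx n} (hi : 0 < i.1) (a : R) (v : Idx n → R) :
    D.bform (Pi.single i.neg a) v = D.bar a * D.lam * v i := by
  have hpos : ∀ k ∈ posIdx n, k ≠ i.neg := fun k hk h => by
    have := congrArg Subtype.val h; simp [mem_posIdx] at hk this; omega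
  have hneg : ∀ k ∈ posIdx n, k.neg = i.neg ↔ k = i := fun k _ =>
    ⟨fun h => Subtype.ext (by simpa using congrArg Subtype.val h), fun h => h ▸ rfl⟩
  rw [bform, Finset.sum_eq_zero fun k hk => by rw [Pi.single_eq_of_ne (hpos k hk), D.bar_zero,
      zero_mul], Pi.single_eq_of_ne (Idx.zero_ne (by simp; omega)), D.bar_zero, zero_mul,
    zero_mul, zero_add, zero_add, Finset.sum_eq_single_of_mem i (mem_posIdx.mpr hi)]
  · rw [Pi.single_eq_same]
  · intro k hk hki
    rw [Pi.single_eq_of_ne fun h => hki ((hneg k hk).mp h), D.bar_zero, zero_mul, zero_mul]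

/-- `q` is quadratic with polar form `b`. -/
lemma hSub_qform_add (p p' v v' : Idx n → R) (hb : D.bform p p' = D.bform v v') :
    D.hSub (D.qform (p + p')) (D.qform (v + v')) =
      D.hAdd (D.hAdd (D.hSub (D.qform p) (D.qform v)) (D.hSub (D.qform p') (D.qform v')))
        (D.minPair (D.qpair p' p - D.qpair v' v
          - D.bar (v (Idx.zero n)) * D.mu * (p' (Idx.zero n) - v' (Idx.zero n)))) := by
  rw [bform_eq, bform_eq, ← sub_eq_zero] at hb
  simp only [hSub_eq, hAdd, minPair, qform_eq, D.bar_sub, sub_mul, D.bar_bar_mul_mu_mul_lam,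
    D.bar_add, Pi.add_apply, qpair_add_left, qpair_add_right, Prod.mk.injEq]
  refine ⟨by abel, ?_⟩
  rw [← sub_eq_zero]
  convert hb using 1
  noncomm_ring

end Forms

namespace IsInvIdeal

variable {D} {I : Set R}

lemma sum_mem (hI : D.IsInvIdeal I) {ι : Type*} {s : Finset ι} {f : ι → R} (hf : ∀ k ∈ s, f k ∈ I) :
    ∑ k ∈ s, f k ∈ I :=
  Finset.sum_induction f (· ∈ I) (fun _ _ ha hb => hI.add_mem _ ha _ hb) hI.zero_mem hf

lemma mul_sub_mul_mem (hI : D.IsInvIdeal I) {x x' y y' : R} (hx : x - x' ∈ I) (hy : y - y' ∈ I) :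
    x * y - x' * y' ∈ I := by
  rw [show x * y - x' * y' = (x - x') * y + x' * (y - y') by noncomm_ring]
  exact hI.add_mem _ (hI.mul_right _ _ hx) _ (hI.mul_left _ _ hy)

lemma bar_sub_mem (hI : D.IsInvIdeal I) {x y : R} (h : x - y ∈ I) : D.bar x - D.bar y ∈ I :=
  D.bar_sub x y ▸ hI.bar_mem _ h

end IsInvIdeal

namespace IsFormParam

variable {D} {Δ : Set (R × R)}

lemma add_mem_JSet (hΔ : D.IsFormParam Δ) {x y : R}
    (hx : x ∈ JSet Δ) (hy : y ∈ JSet Δ) : x + y ∈ JSet Δ := by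
  obtain ⟨zx, hx⟩ := hx
  obtain ⟨zy, hy⟩ := hy
  exact ⟨_, hΔ.add_mem _ hx _ hy⟩

lemma zero_mem_JSet (hΔ : D.IsFormParam Δ) : (0 : R) ∈ JSet Δ :=
  ⟨0, hΔ.min_le ⟨0, by simp [D.bar_zero]⟩⟩

end IsFormParam

lemma bar_mul_mu_mul_mem_of_mem_tildeI {Δ : Set (R × R)} {I : Set R} (hI : D.IsInvIdeal I)
    {z y : R} (hz : z ∈ D.tildeI Δ I) (hy : y ∈ JSet Δ) : D.bar z * D.mu * y ∈ I := by
  simpa [D.bar_bar_mul_mu_mul_lam] using hI.mul_right D.lam _ (hI.bar_mem _ (hz y hy))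

namespace IsRelFormParam

variable {D} {Δ : Set (R × R)} {I : Set R} {Ω : Set (R × R)}

lemma minPair_mem (hΩ : D.IsRelFormParam Δ I Ω) {z : R} (hz : z ∈ I) : D.minPair z ∈ Ω :=
  hΩ.min_le (OmegaMin.base z hz)

lemma zero_mem (hΩ : D.IsRelFormParam Δ I Ω) (hI : D.IsInvIdeal I) : ((0 : R), (0 : R)) ∈ Ω := by
  simpa [minPair, D.bar_zero] using hΩ.minPair_mem hI.zero_mem

end IsRelFormParam

section Matrix

variable {n : ℕ} {Δ : Set (R × R)} {I : Set R} {Ω : Set (R × R)} (g : Matrix (Idx n) (Idx n) R)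

/-- `φ` of the header, as it appears in `unitary` and `principalCongruence`. -/
def qDefect (u : Idx n → R) : R × R := D.hSub (D.qform (g *ᵥ u)) (D.qform u)

lemma qDefect_zero : D.qDefect g 0 = (0, 0) := by
  rw [qDefect, Matrix.mulVec_zero, qform_zero, hSub_zero]

lemma qDefect_single {j : Idx n} (hj : j.1 ≠ 0) (a : R) :
    D.qDefect g (Pi.single j a) = D.hSMul (D.qform fun i => g i j) a := by
  rw [qDefect, Matrix.mulVec_single_eq, D.qform_single hj, hSub_zero, qform_smul]

lemma qDefect_single_zero (x : R) :
    D.qDefect g (Pi.single (Idx.zero n) x) =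
      D.hSMul (D.hSub (D.qform fun i => g i (Idx.zero n)) (1, 0)) x := by
  rw [qDefect, Matrix.mulVec_single_eq, qform_single_zero, hSMul_hSub, qform_smul]
  simp [hSMul]

variable {g}

lemma mulVec_sub_mem (hI : D.IsInvIdeal I)
    (h1 : ∀ i j : Idx n, i.1 ≠ 0 → j.1 ≠ 0 → g i j - (if i = j then (1 : R) else 0) ∈ I)
    {v : Idx n → R} (hv0 : v (Idx.zero n) = 0) {i : Idx n} (hi : i.1 ≠ 0) :
    (g *ᵥ v) i - v i ∈ I := by
  have hv : v i = ∑ k, (if i = k then (1 : R) else 0) * v k := by simp [ite_mul]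
  rw [Matrix.mulVec, dotProduct, hv, ← Finset.sum_sub_distrib]
  refine hI.sum_mem fun k _ => ?_
  rw [← sub_mul]
  by_cases hk : k.1 = 0
  · rw [Idx.eq_zero_iff.mpr hk, hv0, mul_zero]
    exact hI.zero_mem
  · exact hI.mul_right _ _ (h1 i k hi hk)

lemma qDefect_add_mem (hI : D.IsInvIdeal I) (hΩ : D.IsRelFormParam Δ I Ω) {v w : Idx n → R}
    (hb : D.bform (g *ᵥ v) (g *ᵥ w) = D.bform v w) (hv0 : v (Idx.zero n) = 0)
    (hv : ∀ i ∈ posIdx n, (g *ᵥ v) i.neg - v i.neg ∈ I)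
    (hw : ∀ i ∈ posIdx n, (g *ᵥ w) i - w i ∈ I)
    (hφv : D.qDefect g v ∈ Ω) (hφw : D.qDefect g w ∈ Ω) : D.qDefect g (v + w) ∈ Ω := by
  rw [qDefect, Matrix.mulVec_add, D.hSub_qform_add _ _ _ _ hb]
  refine hΩ.add_mem _ (hΩ.add_mem _ hφv _ hφw) _ (hΩ.minPair_mem ?_)
  rw [hv0, D.bar_zero, zero_mul, zero_mul, sub_zero, qpair, qpair, ← Finset.sum_sub_distrib]
  exact hI.sum_mem fun i hi => hI.mul_sub_mul_mem (hI.bar_sub_mem (hw i hi)) (hv i hi)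

lemma bform_mem (hI : D.IsInvIdeal I) {d y : Idx n → R} (hd : ∀ k : Idx n, k.1 ≠ 0 → d k ∈ I)
    (hd0 : d (Idx.zero n) ∈ D.tildeI Δ I) (hy0 : y (Idx.zero n) ∈ JSet Δ) : D.bform d y ∈ I := by
  have hpos : ∀ k ∈ posIdx n, k.1 ≠ 0 := fun k hk => (mem_posIdx.mp hk).ne'
  refine hI.add_mem _ (hI.add_mem _ ?_ _ (D.bar_mul_mu_mul_mem_of_mem_tildeI hI hd0 hy0)) _ ?_
  · exact hI.sum_mem fun k hk => hI.mul_right _ _ (hI.bar_mem _ (hd k (hpos k hk)))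
  · refine hI.sum_mem fun k hk => hI.mul_right _ _ (hI.mul_right _ _ (hI.bar_mem _ (hd k.neg ?_)))
    simpa using hpos k hk

lemma entry_zero_zero_mul_mem_JSet (hΔ : D.IsFormParam Δ) (hq : ∀ u, D.qDefect g u ∈ Δ) {x : R}
    (hx : x ∈ JSet Δ) : g (Idx.zero n) (Idx.zero n) * x ∈ JSet Δ := by
  have hq0 := hq (Pi.single (Idx.zero n) x)
  rw [qDefect_single_zero] at hq0
  have h : (g (Idx.zero n) (Idx.zero n) + -1) * x ∈ JSet Δ := ⟨_, hq0⟩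
  convert hΔ.add_mem_JSet h hx using 1
  noncomm_ring

/-- Reading off `0 = b(e_{-i}, e_0 x) = b(g e_{-i}, g e_0 x)` modulo `I` leaves `λ g_{i0} x`. -/
lemma col_zero_mul_mem (hΔ : D.IsFormParam Δ) (hI : D.IsInvIdeal I)
    (hb : ∀ u v, D.bform (g *ᵥ u) (g *ᵥ v) = D.bform u v) (hq : ∀ u, D.qDefect g u ∈ Δ)
    (h1 : ∀ i j : Idx n, i.1 ≠ 0 → j.1 ≠ 0 → g i j - (if i = j then (1 : R) else 0) ∈ I)
    (h0 : ∀ j : Idx n, j.1 ≠ 0 → g (Idx.zero n) j ∈ D.tildeI Δ I)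
    {x : R} (hx : x ∈ JSet Δ) {i : Idx n} (hi : 0 < i.1) : g i (Idx.zero n) * x ∈ I := by
  have hi' : i.neg.1 ≠ 0 := by simp; omega
  set y := g *ᵥ Pi.single (Idx.zero n) x
  set d : Idx n → R := fun k => g k i.neg - (Pi.single i.neg 1 : Idx n → R) k
  have hcol : g *ᵥ Pi.single i.neg 1 = Pi.single i.neg 1 + d := by
    ext k
    simp [d]
  have hd : D.bform d y ∈ I := by
    refine D.bform_mem (Δ := Δ) hI (fun k hk => ?_) ?_ ?_
    · simpa [d, Pi.single_apply] using h1 k i.neg hk hi'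
    · simpa [d, Pi.single_eq_of_ne (Idx.zero_ne hi')] using h0 i.neg hi'
    · simpa [y, mulVec_single_eq] using D.entry_zero_zero_mul_mem_JSet hΔ hq hx
  have hsum : D.lam * (g i (Idx.zero n) * x) + D.bform d y = 0 := by
    have hyi : y i = g i (Idx.zero n) * x := by simp [y]
    rw [← hyi, ← one_mul D.lam, ← D.bar_one, ← D.bform_single_neg_left hi, ← bform_add_left, ← hcol,
      hb, D.bform_single_neg_left hi, Pi.single_eq_of_ne (Idx.zero_ne hi.ne').symm, mul_zero]
  have hlam : D.lam * (g i (Idx.zero n) * x) ∈ I := by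
    rw [eq_neg_of_add_eq_zero_left hsum]
    exact hI.neg_mem _ hd
  simpa [← mul_assoc, D.bar_lam_mul_lam] using hI.mul_left (D.bar D.lam) _ hlam

lemma qDefect_mem_of_apply_zero (hI : D.IsInvIdeal I) (hΩ : D.IsRelFormParam Δ I Ω)
    (hb : ∀ u v, D.bform (g *ᵥ u) (g *ᵥ v) = D.bform u v)
    (h1 : ∀ i j : Idx n, i.1 ≠ 0 → j.1 ≠ 0 → g i j - (if i = j then (1 : R) else 0) ∈ I)
    (hcol : ∀ j : Idx n, j.1 ≠ 0 → D.qform (fun i => g i j) ∈ Ω)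
    {v : Idx n → R} (hv0 : v (Idx.zero n) = 0) : D.qDefect g v ∈ Ω := by
  rw [← Finset.univ_sum_single v]
  refine (Finset.sum_induction _ (fun w => w (Idx.zero n) = 0 ∧ D.qDefect g w ∈ Ω)
    ?_ ⟨rfl, D.qDefect_zero g ▸ hΩ.zero_mem hI⟩ fun j _ => ?_).2
  · rintro w w' ⟨hw0, hw⟩ ⟨hw'0, hw'⟩
    refine ⟨by simp [hw0, hw'0], D.qDefect_add_mem hI hΩ (hb w w') hw0 (fun i hi => ?_)
      (fun i hi => D.mulVec_sub_mem hI h1 hw'0 (mem_posIdx.mp hi).ne') hw hw'⟩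
    exact D.mulVec_sub_mem hI h1 hw0 (by simpa using (mem_posIdx.mp hi).ne')
  · by_cases hj : j.1 = 0
    · rw [Idx.eq_zero_iff.mpr hj, hv0, Pi.single_zero]
      exact ⟨rfl, D.qDefect_zero g ▸ hΩ.zero_mem hI⟩
    · exact ⟨Pi.single_eq_of_ne (Idx.zero_ne hj) _,
        D.qDefect_single g hj _ ▸ hΩ.smul_mem _ (hcol j hj) _⟩

end Matrix

end OddFormRingData

theorem statement13_general {R : Type*} [Ring R] (D : OddFormRingData R)
    (Δ : Set (R × R)) (hΔ : D.IsFormParam Δ) (n : ℕ)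
    (I : Set R) (Ω : Set (R × R)) (hIΩ : D.IsFormIdeal Δ I Ω)
    (σ : GLn R n) (hσ : σ ∈ D.unitary Δ n) :
    σ ∈ D.principalCongruence Δ I Ω n ↔
      ((∀ i j : Idx n, i.1 ≠ 0 → j.1 ≠ 0 →
          σ.val i j - (if i = j then (1 : R) else 0) ∈ I) ∧
        (∀ j : Idx n, j.1 ≠ 0 → D.qform (fun i => σ.val i j) ∈ Ω) ∧
        ∀ x ∈ JSet Δ,
          D.hSMul (D.hSub (D.qform (fun i => σ.val i (Idx.zero n))) (1, 0)) x ∈ Ω) := by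
  obtain ⟨hI, hΩ⟩ := hIΩ
  constructor
  · rintro ⟨-, h1, hq⟩
    refine ⟨h1, fun j hj => ?_, fun x hx => ?_⟩
    · have h : D.qDefect σ.val (Pi.single j 1) ∈ Ω :=
        hq _ (by simpa [MRD, Pi.single_eq_of_ne (Idx.zero_ne hj)] using hΔ.zero_mem_JSet)
      rwa [D.qDefect_single _ hj, D.hSMul_one] at h
    · have h : D.qDefect σ.val (Pi.single (Idx.zero n) x) ∈ Ω := hq _ (by simpa [MRD])
      rwa [D.qDefect_single_zero] at h
  · rintro ⟨h1, hcol, hcol0⟩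
    refine ⟨hσ, h1, fun u hu => ?_⟩
    have h0 : ∀ j : Idx n, j.1 ≠ 0 → σ.val (Idx.zero n) j ∈ D.tildeI Δ I :=
      fun j hj => (hΩ.le_max (hcol j hj)).2.1
    rw [← sub_add_cancel u (Pi.single (Idx.zero n) (u (Idx.zero n)))]
    refine D.qDefect_add_mem hI hΩ (hσ.1 _ _) (by simp) (fun i hi => ?_) (fun i hi => ?_)
      (D.qDefect_mem_of_apply_zero hI hΩ hσ.1 h1 hcol (by simp))
      (D.qDefect_single_zero _ _ ▸ hcol0 _ hu)
    · exact D.mulVec_sub_mem hI h1 (by simp) (by simpa using (mem_posIdx.mp hi).ne')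
    · simpa [mulVec_single_eq, Pi.single_eq_of_ne (Idx.zero_ne (mem_posIdx.mp hi).ne').symm]
        using D.col_zero_mul_mem hΔ hI hσ.1 hσ.2 h1 h0 hu (mem_posIdx.mp hi)

/-- Characterization of membership in the principal congruence subgroup
`U_{2n+1}((R, Δ), (I, Ω))`. -/
theorem statement13 {R : Type*} [Ring R] [Nontrivial R] (D : OddFormRingData R)
    (Δ : Set (R × R)) (hΔ : D.IsFormParam Δ) (n : ℕ)
    (I : Set R) (Ω : Set (R × R)) (hIΩ : D.IsFormIdeal Δ I Ω)
    (σ : GLn R n) (hσ : σ ∈ D.unitary Δ n) :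
    σ ∈ D.principalCongruence Δ I Ω n ↔
      ((∀ i j : Idx n, i.1 ≠ 0 → j.1 ≠ 0 →
          σ.val i j - (if i = j then (1 : R) else 0) ∈ I) ∧
        (∀ j : Idx n, j.1 ≠ 0 → D.qform (fun i => σ.val i j) ∈ Ω) ∧
        ∀ x ∈ JSet Δ,
          D.hSMul (D.hSub (D.qform (fun i => σ.val i (Idx.zero n))) (1, 0)) x ∈ Ω) :=
  statement13_general D Δ hΔ n I Ω hIΩ σ hσ
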